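/- arXiv:1304.1207 — 2 statements merged into one kernel-verified Lean document; each statement's English description precedes it below -/
import Mathlib

section
/- Let 𝒫 = (P_1 | … | P_M) be a Fourier-reflexive partition of a finite abelian group G with dual 𝒫̂ = (Q_1 | … | Q_M), and let K ∈ ℂ^{M×M} be the Krawtchouk matrix of (𝒫̂, 𝒫), i.e., K_{m,ℓ} = Σ_{χ∈Q_ℓ} χ(g) for any g ∈ P_m. For a subgroup C ≤ Gⁿ define the symmetrized partition enumerator PE_{𝒫ⁿ_sym,C} = Σ_{g∈C} ∏_{t=1}^n Y_{m(g_t)} ∈ ℂ[Y_1, …, Y_M], where m(g_t) is the index with g_t ∈ P_{m(g_t)}; it is homogeneous of degree n and the coefficient of ∏_m Y_m^{s_m} equals |{g ∈ C : comp_𝒫(g) = (s_1,…,s_M)}|. Then PE_{(𝒫̂)ⁿ_sym,C^⊥} = (1/|C|) · ℳ''(PE_{𝒫ⁿ_sym,C}), where ℳ'' is the ℂ-algebra endomorphism of ℂ[Y_1,…,Y_M] determined by ℳ''(Y_m) = Σ_{ℓ=1}^M K_{m,ℓ} Y_ℓ. -/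
/-! Since `K (p x) ℓ = Σ_{q χ = ℓ} χ x`, the transformation sends `Y_{p x}` to `Σ_χ χ(x) Y_{q χ}`.
Expanding the product over the `n` coordinates turns `ℳ''(PE)` into a sum over tuples
`(χ_1, …, χ_n)`, i.e. over characters `χ` of `Gⁿ`, of `(Σ_{g ∈ C} χ g) · ∏_t Y_{q χ_t}`, and by
orthogonality of characters on `C` the inner sum is `|C|` for `χ ∈ C^⊥` and `0` otherwise. -/

open Finset
open scoped Classical

variable {G : Type*} [AddCommGroup G] [Fintype G]

/-- The `t`-th component of a character of `Gⁿ`, under the canonical identification of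
the character group of `Gⁿ` with `Ĝⁿ`. -/
noncomputable def comp1 {n : ℕ} (χ : AddChar (Fin n → G) ℂ) (t : Fin n) : AddChar G ℂ :=
  χ.compAddMonoidHom (AddMonoidHom.single (fun _ : Fin n => G) t)

namespace AddChar

lemma map_sum_eq_prod {A M ι : Type*} [AddCommMonoid A] [CommMonoid M] (ψ : AddChar A M)
    (s : Finset ι) (f : ι → A) : ψ (∑ i ∈ s, f i) = ∏ i ∈ s, ψ (f i) := by
  induction s using Finset.induction with
  | empty => simp
  | insert _ _ h ih => rw [Finset.sum_insert h, Finset.prod_insert h, map_add_eq_mul, ih]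

section Pi

variable {ι A R : Type*} [Fintype ι] [AddCommMonoid A] [CommMonoid R]

def pi (ψ : ι → AddChar A R) : AddChar (ι → A) R where
  toFun a := ∏ i, ψ i (a i)
  map_zero_eq_one' := by simp
  map_add_eq_mul' a b := by simp only [Pi.add_apply, map_add_eq_mul, Finset.prod_mul_distrib]

@[simp] lemma pi_apply (ψ : ι → AddChar A R) (a : ι → A) : pi ψ a = ∏ i, ψ i (a i) := rfl

end Pi

lemma sum_mem_eq_ite {A R : Type*} [AddGroup A] [Fintype A] [CommSemiring R] [IsDomain R]
    (ψ : AddChar A R) (H : AddSubgroup A) :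
    ∑ a ∈ univ.filter (· ∈ H), ψ a = if ∀ h ∈ H, ψ h = 1 then (Nat.card H : R) else 0 := by
  have htriv : ψ.compAddMonoidHom H.subtype = 0 ↔ ∀ h ∈ H, ψ h = 1 := by
    simp [AddChar.ext_iff]
  rw [Finset.sum_subtype (p := (· ∈ H)) _ (fun _ => by simp) ψ, Nat.card_eq_fintype_card]
  exact (sum_eq_ite (ψ.compAddMonoidHom H.subtype)).trans (if_congr htriv rfl rfl)

end AddChar

section Comp1

variable {A : Type*} [AddCommGroup A]

lemma comp1_pi {n : ℕ} (ψ : Fin n → AddChar A ℂ) (t : Fin n) : comp1 (AddChar.pi ψ) t = ψ t := by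
  ext x
  simp only [comp1, AddChar.compAddMonoidHom_apply, AddMonoidHom.single_apply, AddChar.pi_apply]
  rw [Fintype.prod_eq_single t fun s hs => by rw [Pi.single_eq_of_ne hs, AddChar.map_zero_eq_one],
    Pi.single_eq_same]

lemma pi_comp1 {n : ℕ} (χ : AddChar (Fin n → A) ℂ) : AddChar.pi (comp1 χ) = χ := by
  ext g
  simp only [AddChar.pi_apply, comp1, AddChar.compAddMonoidHom_apply, AddMonoidHom.single_apply]
  rw [← AddChar.map_sum_eq_prod, Finset.univ_sum_single]

noncomputable def AddChar.piEquiv (n : ℕ) : (Fin n → AddChar A ℂ) ≃ AddChar (Fin n → A) ℂ where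
  toFun := AddChar.pi
  invFun := comp1
  left_inv ψ := funext (comp1_pi ψ)
  right_inv := pi_comp1

end Comp1

namespace MvPolynomial

variable {σ R : Type*} [CommSemiring R]

lemma isHomogeneous_prod_X {ι : Type*} [Fintype ι] (i : ι → σ) :
    (∏ t, X (i t) : MvPolynomial σ R).IsHomogeneous (Fintype.card ι) := by
  simpa using IsHomogeneous.prod univ (fun t => (X (i t) : MvPolynomial σ R)) (fun _ => 1)
    fun t _ => isHomogeneous_X R (i t)

lemma coeff_prod_X {ι : Type*} [Fintype ι] (i : ι → σ) (s : σ →₀ ℕ) :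
    coeff s (∏ t, X (i t) : MvPolynomial σ R) = if ∀ m, #{t | i t = m} = s m then 1 else 0 := by
  have hexp : ∀ m, (∑ t, Finsupp.single (i t) 1) m = #{t | i t = m} := fun m => by
    simp [Finsupp.finsetSum_apply, Finsupp.single_apply]
  rw [show (∏ t, X (i t) : MvPolynomial σ R) = ∏ t, monomial (Finsupp.single (i t) 1) 1 from rfl,
    ← monomial_sum_one, coeff_monomial]
  exact if_congr (by simp only [Finsupp.ext_iff, hexp]) rfl rfl

section Characters

variable {ι κ A : Type*} [Fintype ι] [DecidableEq ι]

lemma prod_sum_C_mul_X [AddCommMonoid A] [Fintype (AddChar A R)] (q : AddChar A R → κ)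
    (a : ι → A) :
    ∏ t, ∑ ψ : AddChar A R, C (ψ (a t)) * X (q ψ) =
      ∑ ψ : ι → AddChar A R, C (AddChar.pi ψ a) * ∏ t, (X (q (ψ t)) : MvPolynomial κ R) := by
  simp only [Fintype.prod_sum, Finset.prod_mul_distrib, AddChar.pi_apply, map_prod]

lemma sum_C_mul_X_eq_sum_char [Fintype κ] [AddMonoid A] [Fintype (AddChar A R)]
    (q : AddChar A R → κ) (k : κ → R) (x : A)
    (hk : ∀ ℓ, k ℓ = ∑ᶠ ψ : AddChar A R, if q ψ = ℓ then ψ x else 0) :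
    ∑ ℓ, C (k ℓ) * X ℓ = ∑ ψ : AddChar A R, C (ψ x) * (X (q ψ) : MvPolynomial κ R) := by
  rw [← Finset.sum_fiberwise univ q]
  refine Finset.sum_congr rfl fun ℓ _ => ?_
  rw [hk, finsum_eq_sum_of_fintype, ← Finset.sum_filter, map_sum, Finset.sum_mul]
  refine Finset.sum_congr rfl fun ψ hψ => ?_
  rw [(Finset.mem_filter.1 hψ).2]

lemma sum_mem_prod_sum_C_mul_X [IsDomain R] [AddCommGroup A] [Fintype A] [Fintype (AddChar A R)]
    (q : AddChar A R → κ) (H : AddSubgroup (ι → A)) :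
    ∑ a ∈ univ.filter (· ∈ H), ∏ t, ∑ ψ : AddChar A R, C (ψ (a t)) * X (q ψ) =
      (Nat.card H : R) • ∑ ψ : ι → AddChar A R,
        if ∀ h ∈ H, AddChar.pi ψ h = 1 then ∏ t, (X (q (ψ t)) : MvPolynomial κ R) else 0 := by
  simp_rw [prod_sum_C_mul_X]
  rw [Finset.sum_comm, Finset.smul_sum]
  refine Finset.sum_congr rfl fun ψ _ => ?_
  rw [← Finset.sum_mul, ← map_sum, AddChar.sum_mem_eq_ite, smul_ite, smul_zero, apply_ite C,
    map_zero, ite_mul, zero_mul, smul_eq_C_mul]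

end Characters

end MvPolynomial

/-- The blocks of `𝒫` and `𝒫̂` are the fibers of `p` and `q`. -/
theorem macwilliams_symmetrized_partition_enumerator_general
    {κ : Type*} [Fintype κ]
    (p : G → κ) (q : AddChar G ℂ → κ)
    (K : κ → κ → ℂ)
    (hK : ∀ (g : G) (ℓ : κ), K (p g) ℓ = ∑ᶠ χ : AddChar G ℂ, if q χ = ℓ then χ g else 0)
    (n : ℕ) (C : AddSubgroup (Fin n → G))
    (PE PEdual : MvPolynomial κ ℂ)
    (hPE : PE = ∑ g : Fin n → G, if g ∈ C then ∏ t, MvPolynomial.X (p (g t)) else 0)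
    (hPEdual : PEdual = ∑ᶠ χ : AddChar (Fin n → G) ℂ,
      if ∀ h ∈ C, χ h = 1 then ∏ t, MvPolynomial.X (q (comp1 χ t)) else 0) :
    PE.IsHomogeneous n ∧
    (∀ s : κ →₀ ℕ, (∑ m : κ, s m) = n →
      MvPolynomial.coeff s PE =
        (Nat.card {g : Fin n → G // g ∈ C ∧ ∀ m : κ,
          (Finset.univ.filter fun t : Fin n => p (g t) = m).card = s m} : ℂ)) ∧
    PEdual = (Nat.card C : ℂ)⁻¹ •
      (MvPolynomial.aeval fun m : κ =>
        ∑ ℓ : κ, MvPolynomial.C (K m ℓ) * MvPolynomial.X ℓ) PE := by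
  rw [← Finset.sum_filter] at hPE
  subst hPE hPEdual
  refine ⟨?_, fun s _ => ?_, ?_⟩
  · refine MvPolynomial.IsHomogeneous.sum _ _ _ fun g _ => ?_
    simpa using MvPolynomial.isHomogeneous_prod_X (R := ℂ) fun t => p (g t)
  · rw [MvPolynomial.coeff_sum]
    simp only [MvPolynomial.coeff_prod_X]
    rw [Nat.card_eq_fintype_card, Fintype.card_subtype, natCast_card_filter, sum_filter]
    simp only [ite_and]
    -- the two sides differ only in their `Decidable` instances
    congr!
  · have hC : (Nat.card C : ℂ) ≠ 0 := Nat.cast_ne_zero.2 Nat.card_pos.ne'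
    simp_rw [map_sum, map_prod, MvPolynomial.aeval_X,
      MvPolynomial.sum_C_mul_X_eq_sum_char q _ _ (hK _), MvPolynomial.sum_mem_prod_sum_C_mul_X,
      inv_smul_smul₀ hC, finsum_eq_sum_of_fintype, ← (AddChar.piEquiv n).sum_comp]
    simp only [AddChar.piEquiv, Equiv.coe_fn_mk, comp1_pi]

/-- **MacWilliams identity for symmetrized partition enumerators.**
The fibers of `p` are the blocks of a Fourier-reflexive partition `𝒫` of `G` and the
fibers of `q` are the blocks of its dual partition `𝒫̂` (hypothesis `hdual`); `K` is the
Krawtchouk matrix of `(𝒫̂, 𝒫)`.  For a code `C ≤ Gⁿ`, the symmetrized partition enumerator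
`PE` of `C` is homogeneous of degree `n`, the coefficient of `∏ Y_m ^ s_m` in `PE` is the
number of codewords with composition vector `s`, and the symmetrized partition enumerator
of the dual code `C^⊥` (w.r.t. `𝒫̂ⁿ_sym`) equals `|C|⁻¹` times the image of `PE` under the
MacWilliams transformation `ℳ''`, the algebra homomorphism with
`ℳ''(Y_m) = Σ_ℓ K_{m,ℓ} Y_ℓ`. -/
theorem macwilliams_symmetrized_partition_enumerator
    {κ : Type*} [Fintype κ]
    (p : G → κ) (q : AddChar G ℂ → κ)
    (hp : Function.Surjective p) (hq : Function.Surjective q)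
    (hdual : ∀ χ χ' : AddChar G ℂ,
      q χ = q χ' ↔ ∀ m : κ,
        (∑ g : G, if p g = m then χ g else 0) = (∑ g : G, if p g = m then χ' g else 0))
    (K : κ → κ → ℂ)
    (hK : ∀ (g : G) (ℓ : κ), K (p g) ℓ = ∑ᶠ χ : AddChar G ℂ, if q χ = ℓ then χ g else 0)
    (n : ℕ) (C : AddSubgroup (Fin n → G))
    (PE PEdual : MvPolynomial κ ℂ)
    (hPE : PE = ∑ g : Fin n → G, if g ∈ C then ∏ t, MvPolynomial.X (p (g t)) else 0)
    (hPEdual : PEdual = ∑ᶠ χ : AddChar (Fin n → G) ℂ,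
      if ∀ h ∈ C, χ h = 1 then ∏ t, MvPolynomial.X (q (comp1 χ t)) else 0) :
    PE.IsHomogeneous n ∧
    (∀ s : κ →₀ ℕ, (∑ m : κ, s m) = n →
      MvPolynomial.coeff s PE =
        (Nat.card {g : Fin n → G // g ∈ C ∧ ∀ m : κ,
          (Finset.univ.filter fun t : Fin n => p (g t) = m).card = s m} : ℂ)) ∧
    PEdual = (Nat.card C : ℂ)⁻¹ •
      (MvPolynomial.aeval fun m : κ =>
        ∑ ℓ : κ, MvPolynomial.C (K m ℓ) * MvPolynomial.X ℓ) PE :=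
  macwilliams_symmetrized_partition_enumerator_general p q K hK n C PE PEdual hPE hPEdual
end

section
/- Let R be a finite commutative ring with identity admitting a generating character, let χ be any generating character of R, and let α : Rⁿ → (Rⁿ)̂, v ↦ χ_v with χ_v(a) = χ(v·a), be the induced isomorphism. For a partition 𝒫 of Rⁿ define the χ-dual partition 𝒫̂^[χ] = α^{-1}(𝒫̂), a partition of Rⁿ. Then the χ-bidual partition (𝒫̂^[χ])̂^[χ] equals the character-theoretic bidual 𝒫̂̂ of 𝒫 (viewed as a partition of Rⁿ via the canonical identification of the double character group with Rⁿ); in particular, the bidual partition does not depend on the choice of the generating character χ. -/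
open Finset
open scoped Classical

variable {R : Type*} [CommRing R] [Fintype R]

/-- `χ` is a generating character of the finite commutative ring `R`:  the map `r ↦ r·χ`
(where `(r·χ)(a) = χ(r·a)`) is an `R`-module isomorphism from `R` to the character module
`R̂` (bijective, additive, and compatible with the scalar multiplications). -/
def IsGeneratingChar (χ : AddChar R ℂ) : Prop :=
  Function.Bijective (fun r : R => χ.mulShift r) ∧
  (∀ r s : R, χ.mulShift (r + s) = χ.mulShift r * χ.mulShift s) ∧
  (∀ r s a : R, χ.mulShift (r * s) a = χ.mulShift s (r * a))

/-- The character `χ_v : a ↦ χ(v·a)` of `(Rⁿ, +)`, where `v·a = Σ_i v_i a_i` is the dot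
product. -/
noncomputable def dotChar {n : ℕ} (χ : AddChar R ℂ) (v : Fin n → R) :
    AddChar (Fin n → R) ℂ :=
  χ.compAddMonoidHom
    { toFun := fun a => ∑ i, v i * a i
      map_zero' := by simp
      map_add' := fun a b => by simp [mul_add, Finset.sum_add_distrib] }

/-- The sum of the character `χ` over the block of the partition `P` indexed by `c`. -/
noncomputable def blockSum {G : Type*} [AddCommGroup G] [Fintype G]
    (P : Setoid G) (χ : AddChar G ℂ) (c : Quotient P) : ℂ :=
  ∑ g : G, if Quotient.mk P g = c then χ g else 0

/-- The dual partition `P̂` of the character group. -/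
noncomputable def dualSetoid {G : Type*} [AddCommGroup G] [Fintype G]
    (P : Setoid G) : Setoid (AddChar G ℂ) :=
  Setoid.ker (blockSum P)

/-- The sum `Σ_{χ ∈ Q_c} χ(g)` over the block of the dual partition indexed by `c`. -/
noncomputable def dualBlockSum {G : Type*} [AddCommGroup G] [Fintype G]
    (P : Setoid G) (g : G) (c : Quotient (dualSetoid P)) : ℂ :=
  ∑ᶠ χ : AddChar G ℂ, if Quotient.mk (dualSetoid P) χ = c then χ g else 0

/-- The bidual partition `P̂̂`, a partition of `G` via the canonical identification of the
double character group with `G`. -/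
noncomputable def bidualSetoid {G : Type*} [AddCommGroup G] [Fintype G]
    (P : Setoid G) : Setoid G :=
  Setoid.ker (dualBlockSum P)

/-- The `χ`-dual partition `P̂^[χ] = α⁻¹(P̂)` of a partition `P` of `Rⁿ`, where
`α : v ↦ χ_v` is the identification of `Rⁿ` with its character module induced by the
generating character `χ`. -/
noncomputable def chiDual {n : ℕ} (χ : AddChar R ℂ) (P : Setoid (Fin n → R)) :
    Setoid (Fin n → R) :=
  Setoid.comap (fun v => dotChar χ v) (dualSetoid P)

/-!
Only two properties of `α : v ↦ χ_v` matter: it is a bijection `Rⁿ → (Rⁿ)̂` (injective because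
`χ` is generating, hence bijective by counting characters), and it is symmetric,
`χ_v(a) = χ_a(v)`. Reindexing the sum over a block `Q` of `𝒫̂` along `α` turns `Σ_{ψ ∈ Q} ψ(g)`
into `Σ_{w ∈ α⁻¹Q} χ_g(w)`, so under the bijection of blocks induced by `α` the functions of `g`
defining `𝒫̂̂` are those defining the `χ`-dual of `𝒫̂^[χ]`.
-/

section SymmetricSelfDuality

variable {G : Type*} [AddCommGroup G] [Fintype G] {f : G → AddChar G ℂ}

lemma dualBlockSum_mk_eq_blockSum_comap (hf : Function.Bijective f)
    (hsymm : ∀ v g, f v g = f g v) (P : Setoid G) (g w : G) :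
    dualBlockSum P g (Quotient.mk _ (f w)) =
      blockSum ((dualSetoid P).comap f) (f g) (Quotient.mk _ w) := by
  rw [dualBlockSum, ← finsum_comp f hf, finsum_eq_sum_of_fintype, blockSum]
  refine Finset.sum_congr rfl fun v _ => ?_
  simp only [Quotient.eq, Setoid.comap_rel, hsymm v g]

theorem comap_dualSetoid_comap_dualSetoid_eq_bidualSetoid (hf : Function.Bijective f)
    (hsymm : ∀ v g, f v g = f g v) (P : Setoid G) :
    (dualSetoid ((dualSetoid P).comap f)).comap f = bidualSetoid P := by
  let e : Quotient ((dualSetoid P).comap f) ≃ Quotient (dualSetoid P) :=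
    Quotient.congr (Equiv.ofBijective f hf) fun _ _ => Iff.rfl
  have hcomp (g : G) : dualBlockSum P g ∘ e = blockSum ((dualSetoid P).comap f) (f g) :=
    funext <| Quotient.ind fun w => dualBlockSum_mk_eq_blockSum_comap hf hsymm P g w
  ext g h
  change blockSum _ (f g) = blockSum _ (f h) ↔ dualBlockSum P g = dualBlockSum P h
  rw [← hcomp, ← hcomp, e.surjective.right_cancellable]

end SymmetricSelfDuality

section DotChar

variable {S : Type*} [CommRing S] {n : ℕ}

lemma dotChar_apply (χ : AddChar S ℂ) (v a : Fin n → S) :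
    dotChar χ v a = χ (∑ i, v i * a i) := rfl

lemma dotChar_comm (χ : AddChar S ℂ) (v a : Fin n → S) :
    dotChar χ v a = dotChar χ a v := by
  simp only [dotChar_apply, mul_comm]

lemma dotChar_apply_single (χ : AddChar S ℂ) (v : Fin n → S) (i : Fin n) (a : S) :
    dotChar χ v (Pi.single i a) = χ.mulShift (v i) a := by
  rw [dotChar_apply, AddChar.mulShift_apply, Finset.sum_eq_single i] <;>
    simp_all

lemma dotChar_injective {χ : AddChar S ℂ} (hχ : Function.Injective χ.mulShift) :
    Function.Injective (dotChar (n := n) χ) := fun v w hvw =>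
  funext fun i => hχ <| AddChar.ext _ _ fun a => by
    simpa only [dotChar_apply_single] using DFunLike.congr_fun hvw (Pi.single i a)

lemma dotChar_bijective [Finite S] {χ : AddChar S ℂ} (hχ : Function.Injective χ.mulShift) :
    Function.Bijective (dotChar (n := n) χ) :=
  (dotChar_injective hχ).bijective_of_nat_card_le <| by
    cases nonempty_fintype S
    simp

end DotChar

/-- The `χ`-bidual of a partition `P` of `Rⁿ` equals the character-theoretic bidual of
`P`; in particular it does not depend on the choice of the generating character `χ`. -/
theorem chiDual_chiDual_eq_bidual (n : ℕ) (χ : AddChar R ℂ) (hχ : IsGeneratingChar χ)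
    (P : Setoid (Fin n → R)) :
    chiDual χ (chiDual χ P) = bidualSetoid P :=
  comap_dualSetoid_comap_dualSetoid_eq_bidualSetoid (dotChar_bijective hχ.1.1) (dotChar_comm χ) P
end
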